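/- arXiv:2601.01929 — 4 statements merged into one kernel-verified Lean document; each statement's English description precedes it below -/
import Mathlib

section
/- Let a, b, n be positive integers with n ≥ a + b. Let A be an a-subset of [n], B the b-partner of A, and A' the a-partner of B. Then the pair (A', B) is maximal and A ≼ A' in lex order. -/
open Finset

/-- Lexicographic order on finite sets: `A ≼ B` iff `A ⊇ B` or `min (A \ B) < min (B \ A)`. -/
def lexLE (A B : Finset ℕ) : Prop := B ⊆ A ∨ (A \ B).min < (B \ A).min

instance : DecidableRel lexLE := fun A B => by unfold lexLE; infer_instance

/-- The family of all `k`-element subsets of `[n] = {1,…,n}`. -/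
def ksubsets (n k : ℕ) : Finset (Finset ℕ) := (Finset.Icc 1 n).powersetCard k

/-- Two families are cross intersecting. -/
def crossInt (A B : Finset (Finset ℕ)) : Prop := ∀ X ∈ A, ∀ Y ∈ B, (X ∩ Y).Nonempty

/-- `ℒ([n], R, k)`: all `k`-subsets of `[n]` lexicographically no more than `R`. -/
def Lfam (n : ℕ) (R : Finset ℕ) (k : ℕ) : Finset (Finset ℕ) :=
  (ksubsets n k).filter (fun F => lexLE F R)

/-- `ℒ([n], r, k)`: the first `r` sets of `binomial([n],k)` in lexicographic order. -/
def Lnum (n r k : ℕ) : Finset (Finset ℕ) :=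
  (ksubsets n k).filter (fun F => ((ksubsets n k).filter (fun G => lexLE G F)).card ≤ r)

/-- `F` and `H` are partners: they strongly intersect at their last element. -/
def isPartner (F H : Finset ℕ) : Prop := ∃ q, F ∩ H = {q} ∧ F ∪ H = Finset.Icc 1 q

/-- `K` is the `k`-partner of `F` (inside `[n]`). -/
def isKPartner (n : ℕ) (F : Finset ℕ) (k : ℕ) (K : Finset ℕ) : Prop :=
  ∃ H, isPartner F H ∧
    ((k = H.card ∧ K = H) ∨
     (H.card < k ∧ K = H ∪ Finset.Icc (n - k + H.card + 1) n) ∨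
     (k < H.card ∧ K ∈ ksubsets n k ∧ lexLE K H ∧
        ∀ K' ∈ ksubsets n k, lexLE K' H → lexLE K' K))

/-- `ℓ(F)`: the length of the maximal tail interval `[n-ℓ+1, n] ⊆ F`. -/
def tailLen (n : ℕ) (F : Finset ℕ) : ℕ :=
  ((Finset.range (n + 1)).filter (fun x => Finset.Icc (n - x + 1) n ⊆ F)).sup id

/-- `F^t = [n - ℓ(F) + 1, n]`. -/
def tailSet (n : ℕ) (F : Finset ℕ) : Finset ℕ := Finset.Icc (n - tailLen n F + 1) n

/-- `𝒜` (a family of `f`-subsets of `[n]`) is maximal with respect to `ℬ`. -/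
def maximalTo (n f : ℕ) (A B : Finset (Finset ℕ)) : Prop :=
  ∀ A' ⊆ ksubsets n f, A ⊆ A' → crossInt A' B → A' = A

/-- The pair of sets `(A, B)` is maximal. -/
def pairMaximal (n : ℕ) (A B : Finset ℕ) : Prop :=
  crossInt (Lfam n A A.card) (Lfam n B B.card) ∧
  maximalTo n A.card (Lfam n A A.card) (Lfam n B B.card) ∧
  maximalTo n B.card (Lfam n B B.card) (Lfam n A A.card)

/-- `A` is the `|A|`-parity of `B`: same set after removing tails, and
`ℓ(B) - ℓ(A) = |B| - |A|` (stated additively). -/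
def isParity (n : ℕ) (A B : Finset ℕ) : Prop :=
  A \ tailSet n A = B \ tailSet n B ∧ tailLen n A + B.card = tailLen n B + A.card

/-! ### Auxiliary lemmas -/

lemma lexLE_iff (A B : Finset ℕ) :
    lexLE A B ↔ B ⊆ A ∨ ∃ x ∈ A \ B, ∀ c ∈ B \ A, x < c := by
  unfold lexLE
  apply or_congr_right
  constructor
  · intro h
    have hne : (A \ B).Nonempty := by
      rw [Finset.nonempty_iff_ne_empty]
      intro he
      rw [he, Finset.min_empty] at h
      exact absurd h not_top_lt
    refine ⟨(A \ B).min' hne, (A \ B).min'_mem hne, fun c hc => ?_⟩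
    have h1 : ((A \ B).min' hne : WithTop ℕ) = (A \ B).min := Finset.coe_min' hne
    have h2 : (B \ A).min ≤ (c : WithTop ℕ) := Finset.min_le hc
    have h3 : ((A \ B).min' hne : WithTop ℕ) < (c : WithTop ℕ) := by
      rw [h1]; exact lt_of_lt_of_le h h2
    exact_mod_cast h3
  · rintro ⟨x, hx, hall⟩
    have h1 : (A \ B).min ≤ (x : WithTop ℕ) := Finset.min_le hx
    apply lt_of_le_of_lt h1
    rcases (B \ A).eq_empty_or_nonempty with he | hne
    · rw [he, Finset.min_empty]
      exact WithTop.coe_lt_top x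
    · rw [← Finset.coe_min' hne]
      exact WithTop.coe_lt_coe.mpr (hall _ ((B \ A).min'_mem hne))

lemma not_lexLE {X K : Finset ℕ} (h : ¬ lexLE X K) :
    ¬ K ⊆ X ∧ ∀ x ∈ X \ K, ∃ c ∈ K \ X, c ≤ x := by
  rw [lexLE_iff] at h
  push_neg at h
  obtain ⟨h1, h2⟩ := h
  refine ⟨h1, fun x hx => ?_⟩
  obtain ⟨c, hc, hcx⟩ := h2 x hx
  exact ⟨c, hc, hcx⟩

lemma lexLE_trans {A B C : Finset ℕ} (h1 : lexLE A B) (h2 : lexLE B C) : lexLE A C := by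
  rw [lexLE_iff] at h1 h2 ⊢
  rcases h1 with hBA | ⟨x, hx, hx2⟩ <;> rcases h2 with hCB | ⟨y, hy, hy2⟩
  · exact Or.inl (hCB.trans hBA)
  · obtain ⟨hyB, hyC⟩ := Finset.mem_sdiff.mp hy
    refine Or.inr ⟨y, Finset.mem_sdiff.mpr ⟨hBA hyB, hyC⟩, fun c hc => ?_⟩
    obtain ⟨hcC, hcA⟩ := Finset.mem_sdiff.mp hc
    exact hy2 c (Finset.mem_sdiff.mpr ⟨hcC, fun hcB => hcA (hBA hcB)⟩)
  · obtain ⟨hxA, hxB⟩ := Finset.mem_sdiff.mp hx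
    refine Or.inr ⟨x, Finset.mem_sdiff.mpr ⟨hxA, fun hxC => hxB (hCB hxC)⟩, fun c hc => ?_⟩
    obtain ⟨hcC, hcA⟩ := Finset.mem_sdiff.mp hc
    exact hx2 c (Finset.mem_sdiff.mpr ⟨hCB hcC, hcA⟩)
  · obtain ⟨hxA, hxB⟩ := Finset.mem_sdiff.mp hx
    obtain ⟨hyB, hyC⟩ := Finset.mem_sdiff.mp hy
    rcases le_total x y with hxy | hyx
    · refine Or.inr ⟨x, Finset.mem_sdiff.mpr ⟨hxA, fun hxC => ?_⟩, fun c hc => ?_⟩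
      · exact absurd (hy2 x (Finset.mem_sdiff.mpr ⟨hxC, hxB⟩)) (not_lt.mpr hxy)
      · obtain ⟨hcC, hcA⟩ := Finset.mem_sdiff.mp hc
        by_cases hcB : c ∈ B
        · exact hx2 c (Finset.mem_sdiff.mpr ⟨hcB, hcA⟩)
        · exact lt_of_le_of_lt hxy (hy2 c (Finset.mem_sdiff.mpr ⟨hcC, hcB⟩))
    · have hyA : y ∈ A := by
        by_contra hyA
        exact absurd (hx2 y (Finset.mem_sdiff.mpr ⟨hyB, hyA⟩)) (not_lt.mpr hyx)
      refine Or.inr ⟨y, Finset.mem_sdiff.mpr ⟨hyA, hyC⟩, fun c hc => ?_⟩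
      obtain ⟨hcC, hcA⟩ := Finset.mem_sdiff.mp hc
      by_cases hcB : c ∈ B
      · exact lt_of_le_of_lt hyx (hx2 c (Finset.mem_sdiff.mpr ⟨hcB, hcA⟩))
      · exact hy2 c (Finset.mem_sdiff.mpr ⟨hcC, hcB⟩)

lemma partner_facts {F H : Finset ℕ} {q : ℕ} (hFH : F ∩ H = {q})
    (hFu : F ∪ H = Finset.Icc 1 q) :
    q ∈ F ∧ q ∈ H ∧ F ⊆ Finset.Icc 1 q ∧ H ⊆ Finset.Icc 1 q ∧ F.card + H.card = q + 1 := by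
  have hq : q ∈ F ∩ H := hFH ▸ Finset.mem_singleton_self q
  obtain ⟨hqF, hqH⟩ := Finset.mem_inter.mp hq
  have hFs : F ⊆ Finset.Icc 1 q := by rw [← hFu]; exact Finset.subset_union_left
  have hHs : H ⊆ Finset.Icc 1 q := by rw [← hFu]; exact Finset.subset_union_right
  have hq1 : 1 ≤ q := (Finset.mem_Icc.mp (hFs hqF)).1
  have hc := Finset.card_union_add_card_inter F H
  rw [hFH, hFu, Finset.card_singleton, Nat.card_Icc] at hc
  exact ⟨hqF, hqH, hFs, hHs, by omega⟩

lemma exists_bottom : ∀ (f : ℕ) (D : Finset ℕ), f ≤ D.card →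
    ∃ Y, Y ⊆ D ∧ Y.card = f ∧ ∀ d ∈ D, d ∉ Y → ∀ y ∈ Y, y < d := by
  intro f
  induction f with
  | zero =>
    exact fun D _ => ⟨∅, Finset.empty_subset D, Finset.card_empty,
      fun d _ _ y hy => absurd hy (Finset.notMem_empty y)⟩
  | succ f ih =>
    intro D hD
    have hne : D.Nonempty := Finset.card_pos.mp (by omega)
    set m := D.min' hne with hm
    have hmD : m ∈ D := D.min'_mem hne
    have hcard : f ≤ (D.erase m).card := by
      rw [Finset.card_erase_of_mem hmD]; omega
    obtain ⟨Y', hY'sub, hY'card, hY'bot⟩ := ih (D.erase m) hcard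
    have hmY' : m ∉ Y' := fun h => (Finset.mem_erase.mp (hY'sub h)).1 rfl
    refine ⟨insert m Y', ?_, ?_, ?_⟩
    · intro y hy
      rcases Finset.mem_insert.mp hy with rfl | hy
      · exact hmD
      · exact (Finset.mem_erase.mp (hY'sub hy)).2
    · rw [Finset.card_insert_of_notMem hmY', hY'card]
    · intro d hd hdY y hy
      have hdm : d ≠ m := fun h => hdY (h ▸ Finset.mem_insert_self m Y')
      have hdE : d ∈ D.erase m := Finset.mem_erase.mpr ⟨hdm, hd⟩
      rcases Finset.mem_insert.mp hy with rfl | hy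
      · exact lt_of_le_of_ne (D.min'_le d hd) (Ne.symm hdm)
      · exact hY'bot d hdE (fun h => hdY (Finset.mem_insert_of_mem h)) y hy

lemma starH {X H : Finset ℕ} (h : ¬ lexLE X H) :
    ∃ p, p ∈ H ∧ p ∉ X ∧ ∀ x ∈ X, x < p → x ∈ H := by
  obtain ⟨hns, hall⟩ := not_lexLE h
  have hne : (H \ X).Nonempty := Finset.sdiff_nonempty.mpr hns
  obtain ⟨hpH, hpX⟩ := Finset.mem_sdiff.mp ((H \ X).min'_mem hne)
  refine ⟨(H \ X).min' hne, hpH, hpX, fun x hx hxp => ?_⟩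
  by_contra hxH
  obtain ⟨c, hc, hcx⟩ := hall x (Finset.mem_sdiff.mpr ⟨hx, hxH⟩)
  have := (H \ X).min'_le c hc
  omega

/-- Key lemma: if `K` is a `k`-partner of `F` and `X` is a `k`-set with `¬ X ≼ K`,
then there is an `f`-set `Y ≼ F` disjoint from `X`. -/
lemma main_disjoint {n k f : ℕ} (hf : 1 ≤ f) (hkfn : k + f ≤ n)
    {F K X : Finset ℕ} (hF : F ∈ ksubsets n f) (hK : isKPartner n F k K)
    (hX : X ∈ ksubsets n k) (hnl : ¬ lexLE X K) :
    ∃ Y ∈ Lfam n F f, X ∩ Y = ∅ := by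
  obtain ⟨H, ⟨q, hFH, hFu⟩, hcases⟩ := hK
  obtain ⟨hqF, hqH, hFq, hHq, hcard⟩ := partner_facts hFH hFu
  rw [ksubsets, Finset.mem_powersetCard] at hF hX
  obtain ⟨hFsub, hFcard⟩ := hF
  obtain ⟨hXsub, hXcard⟩ := hX
  have hqn : q ≤ n := (Finset.mem_Icc.mp (hFsub hqF)).2
  have hcard' : f + H.card = q + 1 := by omega
  -- Step A: the "star" property
  have hstar : ∃ p, p ∈ H ∧ p ∉ X ∧ ∀ x ∈ X, x < p → x ∈ H := by
    rcases hcases with ⟨hk, rfl⟩ | ⟨hk, rfl⟩ | ⟨hk, hKk, hKH, hmax⟩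
    · exact starH hnl
    · -- K = H ∪ T
      set T := Finset.Icc (n - k + H.card + 1) n with hT
      have hqle : q ≤ n - k + H.card := by omega
      obtain ⟨hns, hall⟩ := not_lexLE hnl
      have hHT : Disjoint H T := by
        rw [Finset.disjoint_left]
        intro z hz hzT
        have h1 := (Finset.mem_Icc.mp (hHq hz)).2
        have h2 := (Finset.mem_Icc.mp hzT).1
        omega
      have hTcard : T.card = k - H.card := by rw [hT, Nat.card_Icc]; omega
      have hKcard : (H ∪ T).card = k := by
        rw [Finset.card_union_of_disjoint hHT, hTcard]; omega
      have hHX : ¬ H ⊆ X := by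
        intro hHX
        apply hnl
        by_cases hXK : X ⊆ H ∪ T
        · have : X = H ∪ T :=
            Finset.eq_of_subset_of_card_le hXK (by rw [hKcard, hXcard])
          rw [this]
          exact Or.inl Finset.Subset.rfl
        · obtain ⟨x₀, hx₀X, hx₀K⟩ := Finset.not_subset.mp hXK
          rw [lexLE_iff]
          refine Or.inr ⟨x₀, Finset.mem_sdiff.mpr ⟨hx₀X, hx₀K⟩, fun c hc => ?_⟩
          obtain ⟨hcK, hcX⟩ := Finset.mem_sdiff.mp hc
          have hcT : c ∈ T := by
            rcases Finset.mem_union.mp hcK with h | h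
            · exact absurd (hHX h) hcX
            · exact h
          have hc1 : n - k + H.card + 1 ≤ c := (Finset.mem_Icc.mp hcT).1
          have hx₀n : x₀ ≤ n := (Finset.mem_Icc.mp (hXsub hx₀X)).2
          have hx₀T : x₀ ∉ T := fun h => hx₀K (Finset.mem_union_right _ h)
          have hx₀lt : x₀ < n - k + H.card + 1 := by
            by_contra hcon
            exact hx₀T (Finset.mem_Icc.mpr ⟨not_lt.mp hcon, hx₀n⟩)
          omega
      have hne : (H \ X).Nonempty := Finset.sdiff_nonempty.mpr hHX
      obtain ⟨hpH, hpX⟩ := Finset.mem_sdiff.mp ((H \ X).min'_mem hne)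
      refine ⟨(H \ X).min' hne, hpH, hpX, fun x hx hxp => ?_⟩
      by_contra hxH
      have hpq : (H \ X).min' hne ≤ q := (Finset.mem_Icc.mp (hHq hpH)).2
      have hxT : x ∉ T := by
        intro h
        have := (Finset.mem_Icc.mp h).1
        omega
      have hxK : x ∉ H ∪ T := by
        intro h
        rcases Finset.mem_union.mp h with h | h
        exacts [hxH h, hxT h]
      obtain ⟨c, hc, hcx⟩ := hall x (Finset.mem_sdiff.mpr ⟨hx, hxK⟩)
      obtain ⟨hcK, hcX⟩ := Finset.mem_sdiff.mp hc
      rcases Finset.mem_union.mp hcK with h | h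
      · have := (H \ X).min'_le c (Finset.mem_sdiff.mpr ⟨h, hcX⟩)
        omega
      · have := (Finset.mem_Icc.mp h).1
        omega
    · exact starH (fun h => hnl (hmax X (by rw [ksubsets, Finset.mem_powersetCard]; exact ⟨hXsub, hXcard⟩) h))
  obtain ⟨p, hpH, hpX, hstar⟩ := hstar
  obtain ⟨hp1, hpq⟩ := Finset.mem_Icc.mp (hHq hpH)
  -- Step B: construct Y as the f smallest elements of [n] \ X
  set D := Finset.Icc 1 n \ X with hD
  have hDcard : f ≤ D.card := by
    rw [hD, Finset.card_sdiff_of_subset hXsub, Nat.card_Icc, hXcard]; omega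
  obtain ⟨Y, hYD, hYcard, hbot⟩ := exists_bottom f D hDcard
  have hYIcc : Y ⊆ Finset.Icc 1 n := fun y hy => (Finset.mem_sdiff.mp (hYD hy)).1
  have hYX : ∀ y ∈ Y, y ∉ X := fun y hy => (Finset.mem_sdiff.mp (hYD hy)).2
  refine ⟨Y, ?_, ?_⟩
  · rw [Lfam, Finset.mem_filter]
    refine ⟨by rw [ksubsets, Finset.mem_powersetCard]; exact ⟨hYIcc, hYcard⟩, ?_⟩
    by_cases hFY : F ⊆ Y
    · exact Or.inl hFY
    · rw [lexLE_iff]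
      have hFYne : (F \ Y).Nonempty := Finset.sdiff_nonempty.mpr hFY
      set g := (F \ Y).min' hFYne with hg
      obtain ⟨hgF, hgY⟩ := Finset.mem_sdiff.mp ((F \ Y).min'_mem hFYne)
      have hgall : ∀ c ∈ F \ Y, g ≤ c := fun c hc => (F \ Y).min'_le c hc
      have hYFne : (Y \ F).Nonempty := by
        rw [Finset.sdiff_nonempty]
        intro hsub
        have hYF : Y = F :=
          Finset.eq_of_subset_of_card_le hsub (by rw [hYcard, hFcard])
        exact hFY (hYF ▸ Finset.Subset.rfl)
      by_cases hgX : g ∈ X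
      · have hpg : p < g := by
          have h1 : ¬ g < p := by
            intro h
            have hgH := hstar g hgX h
            have hgq : g ∈ F ∩ H := Finset.mem_inter.mpr ⟨hgF, hgH⟩
            rw [hFH] at hgq
            have := Finset.mem_singleton.mp hgq
            omega
          have h2 : g ≠ p := fun h => hpX (h ▸ hgX)
          omega
        by_cases hpY : p ∈ Y
        · have hpF : p ∉ F := by
            intro hpF
            have hpq' : p ∈ F ∩ H := Finset.mem_inter.mpr ⟨hpF, hpH⟩
            rw [hFH] at hpq'
            have hpeq := Finset.mem_singleton.mp hpq'
            have := (Finset.mem_Icc.mp (hFq hgF)).2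
            omega
          refine Or.inr ⟨p, Finset.mem_sdiff.mpr ⟨hpY, hpF⟩, fun c hc => ?_⟩
          exact lt_of_lt_of_le hpg (hgall c hc)
        · have hpD : p ∈ D :=
            Finset.mem_sdiff.mpr ⟨Finset.mem_Icc.mpr ⟨hp1, le_trans hpq hqn⟩, hpX⟩
          obtain ⟨y₀, hy₀⟩ := hYFne
          obtain ⟨hy₀Y, hy₀F⟩ := Finset.mem_sdiff.mp hy₀
          have hy₀p : y₀ < p := hbot p hpD hpY y₀ hy₀Y
          refine Or.inr ⟨y₀, hy₀, fun c hc => ?_⟩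
          exact lt_of_lt_of_le (lt_trans hy₀p hpg) (hgall c hc)
      · have hgD : g ∈ D := Finset.mem_sdiff.mpr
          ⟨Finset.mem_Icc.mpr ⟨(Finset.mem_Icc.mp (hFsub hgF)).1,
            (Finset.mem_Icc.mp (hFsub hgF)).2⟩, hgX⟩
        obtain ⟨y₀, hy₀⟩ := hYFne
        obtain ⟨hy₀Y, hy₀F⟩ := Finset.mem_sdiff.mp hy₀
        have hy₀g : y₀ < g := hbot g hgD hgY y₀ hy₀Y
        exact Or.inr ⟨y₀, hy₀, fun c hc => lt_of_lt_of_le hy₀g (hgall c hc)⟩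
  · rw [Finset.eq_empty_iff_forall_notMem]
    intro z hz
    obtain ⟨hzX, hzY⟩ := Finset.mem_inter.mp hz
    exact hYX z hzY hzX

lemma kpartner_mem {n k f : ℕ} (hf : 1 ≤ f) (hkfn : k + f ≤ n)
    {F K : Finset ℕ} (hF : F ∈ ksubsets n f) (hK : isKPartner n F k K) :
    K ∈ ksubsets n k := by
  obtain ⟨H, ⟨q, hFH, hFu⟩, hcases⟩ := hK
  obtain ⟨hqF, hqH, hFq, hHq, hcard⟩ := partner_facts hFH hFu
  rw [ksubsets, Finset.mem_powersetCard] at hF ⊢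
  obtain ⟨hFsub, hFcard⟩ := hF
  have hqn : q ≤ n := (Finset.mem_Icc.mp (hFsub hqF)).2
  have hHn : H ⊆ Finset.Icc 1 n := fun z hz => by
    have := Finset.mem_Icc.mp (hHq hz)
    exact Finset.mem_Icc.mpr ⟨this.1, le_trans this.2 hqn⟩
  rcases hcases with ⟨hk, rfl⟩ | ⟨hk, rfl⟩ | ⟨hk, hKk, _, _⟩
  · exact ⟨hHn, hk.symm⟩
  · constructor
    · intro z hz
      rcases Finset.mem_union.mp hz with h | h
      · exact hHn h
      · have := Finset.mem_Icc.mp h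
        exact Finset.mem_Icc.mpr ⟨by omega, this.2⟩
    · have hHT : Disjoint H (Finset.Icc (n - k + H.card + 1) n) := by
        rw [Finset.disjoint_left]
        intro z hz hzT
        have h1 := (Finset.mem_Icc.mp (hHq hz)).2
        have h2 := (Finset.mem_Icc.mp hzT).1
        omega
      rw [Finset.card_union_of_disjoint hHT, Nat.card_Icc]
      omega
  · rw [ksubsets, Finset.mem_powersetCard] at hKk
    exact hKk

lemma core_cross {n q : ℕ} {F H X Y : Finset ℕ}
    (hFH : F ∩ H = {q}) (hFu : F ∪ H = Finset.Icc 1 q)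
    (hX : X ⊆ Finset.Icc 1 n) (hY : Y ⊆ Finset.Icc 1 n)
    (hXH : lexLE X H) (hYF : lexLE Y F) : (X ∩ Y).Nonempty := by
  by_contra hne
  rw [Finset.not_nonempty_iff_eq_empty] at hne
  have hdisj : ∀ z, z ∈ X → z ∉ Y := fun z hz hz' =>
    (Finset.notMem_empty z) (hne ▸ Finset.mem_inter.mpr ⟨hz, hz'⟩)
  obtain ⟨hqF, hqH, hFq, hHq, _⟩ := partner_facts hFH hFu
  have hcF : ∀ z ∈ Finset.Icc 1 n, z < q → z ∉ H → z ∈ F := by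
    intro z hz hzq hzH
    have hzu : z ∈ F ∪ H := by
      rw [hFu]
      exact Finset.mem_Icc.mpr ⟨(Finset.mem_Icc.mp hz).1, le_of_lt hzq⟩
    rcases Finset.mem_union.mp hzu with h | h
    · exact h
    · exact absurd h hzH
  have hcH : ∀ z ∈ Finset.Icc 1 n, z < q → z ∉ F → z ∈ H := by
    intro z hz hzq hzF
    have hzu : z ∈ F ∪ H := by
      rw [hFu]
      exact Finset.mem_Icc.mpr ⟨(Finset.mem_Icc.mp hz).1, le_of_lt hzq⟩
    rcases Finset.mem_union.mp hzu with h | h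
    · exact absurd h hzF
    · exact h
  rw [lexLE_iff] at hXH hYF
  rcases hXH with hHX | ⟨x, hx, hx2⟩
  · rcases hYF with hFY | ⟨y, hy, hy2⟩
    · exact hdisj q (hHX hqH) (hFY hqF)
    · obtain ⟨hyY, hyF⟩ := Finset.mem_sdiff.mp hy
      have hqX := hHX hqH
      have hqY := hdisj q hqX
      have hyq : y < q := hy2 q (Finset.mem_sdiff.mpr ⟨hqF, hqY⟩)
      have hyH : y ∈ H := hcH y (hY hyY) hyq hyF
      exact hdisj y (hHX hyH) hyY
  · obtain ⟨hxX, hxH⟩ := Finset.mem_sdiff.mp hx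
    rcases hYF with hFY | ⟨y, hy, hy2⟩
    · have hqY := hFY hqF
      have hqX : q ∉ X := fun h => hdisj q h hqY
      have hxq : x < q := hx2 q (Finset.mem_sdiff.mpr ⟨hqH, hqX⟩)
      have hxF : x ∈ F := hcF x (hX hxX) hxq hxH
      exact hdisj x hxX (hFY hxF)
    · obtain ⟨hyY, hyF⟩ := Finset.mem_sdiff.mp hy
      rcases le_total x y with hxy | hyx
      · have hxq : x < q := by
          by_cases hqX : q ∈ X
          · exact lt_of_le_of_lt hxy (hy2 q (Finset.mem_sdiff.mpr ⟨hqF, hdisj q hqX⟩))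
          · exact hx2 q (Finset.mem_sdiff.mpr ⟨hqH, hqX⟩)
        have hxF : x ∈ F := hcF x (hX hxX) hxq hxH
        have hyx' : y < x := hy2 x (Finset.mem_sdiff.mpr ⟨hxF, hdisj x hxX⟩)
        exact absurd hyx' (not_lt.mpr hxy)
      · have hyq : y < q := by
          by_cases hqY : q ∈ Y
          · have hqX : q ∉ X := fun h => hdisj q h hqY
            exact lt_of_le_of_lt hyx (hx2 q (Finset.mem_sdiff.mpr ⟨hqH, hqX⟩))
          · exact hy2 q (Finset.mem_sdiff.mpr ⟨hqF, hqY⟩)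
        have hyH : y ∈ H := hcH y (hY hyY) hyq hyF
        have hyX : y ∉ X := fun h => hdisj y h hyY
        have hxy' : x < y := hx2 y (Finset.mem_sdiff.mpr ⟨hyH, hyX⟩)
        exact absurd hxy' (not_lt.mpr hyx)

lemma kpartner_cross {n k f : ℕ} {F K : Finset ℕ} (hK : isKPartner n F k K) :
    crossInt (Lfam n K k) (Lfam n F f) := by
  obtain ⟨H, ⟨q, hFH, hFu⟩, hcases⟩ := hK
  have hKH : lexLE K H := by
    rcases hcases with ⟨hk, rfl⟩ | ⟨hk, rfl⟩ | ⟨_, _, h, _⟩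
    · exact Or.inl Finset.Subset.rfl
    · exact Or.inl Finset.subset_union_left
    · exact h
  intro X hX Y hY
  rw [Lfam, Finset.mem_filter, ksubsets, Finset.mem_powersetCard] at hX hY
  exact core_cross hFH hFu hX.1.1 hY.1.1 (lexLE_trans hX.2 hKH) hY.2

theorem stmt12 (a b n : ℕ) (ha : 1 ≤ a) (hb : 1 ≤ b) (hab : a + b ≤ n)
    (A B A' : Finset ℕ) (hA : A ∈ ksubsets n a)
    (hB : isKPartner n A b B) (hA' : isKPartner n B a A') :
    pairMaximal n A' B ∧ lexLE A A' := by
  have hba : b + a ≤ n := by omega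
  have hBmem : B ∈ ksubsets n b := kpartner_mem ha hba hA hB
  have hA'mem : A' ∈ ksubsets n a := kpartner_mem hb hab hBmem hA'
  have hBcard : B.card = b := by
    have := hBmem
    rw [ksubsets, Finset.mem_powersetCard] at this
    exact this.2
  have hA'card : A'.card = a := by
    have := hA'mem
    rw [ksubsets, Finset.mem_powersetCard] at this
    exact this.2
  have hAA : A ∈ Lfam n A a := by
    rw [Lfam, Finset.mem_filter]
    exact ⟨hA, Or.inl Finset.Subset.rfl⟩
  have crossBA : crossInt (Lfam n B b) (Lfam n A a) := kpartner_cross hB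
  have crossA'B : crossInt (Lfam n A' a) (Lfam n B b) := kpartner_cross hA'
  have hlex : lexLE A A' := by
    by_contra hnl
    obtain ⟨Y, hY, hXY⟩ := main_disjoint hb hab hBmem hA' hA hnl
    have h2 : (Y ∩ A).Nonempty := crossBA Y hY A hAA
    rw [Finset.inter_comm, hXY] at h2
    exact Finset.not_nonempty_empty h2
  have hmax1 : maximalTo n a (Lfam n A' a) (Lfam n B b) := by
    intro 𝒜 h𝒜sub h𝒜sup hcross
    apply Finset.Subset.antisymm _ h𝒜sup
    intro X hX𝒜
    have hXk : X ∈ ksubsets n a := h𝒜sub hX𝒜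
    rw [Lfam, Finset.mem_filter]
    refine ⟨hXk, ?_⟩
    by_contra hnl
    obtain ⟨Y, hY, hXY⟩ := main_disjoint hb hab hBmem hA' hXk hnl
    have h2 := hcross X hX𝒜 Y hY
    rw [hXY] at h2
    exact Finset.not_nonempty_empty h2
  have hmax2 : maximalTo n b (Lfam n B b) (Lfam n A' a) := by
    intro 𝒴 h𝒴sub h𝒴sup hcross
    apply Finset.Subset.antisymm _ h𝒴sup
    intro Y hY𝒴
    have hYk : Y ∈ ksubsets n b := h𝒴sub hY𝒴
    rw [Lfam, Finset.mem_filter]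
    refine ⟨hYk, ?_⟩
    by_contra hnl
    obtain ⟨X, hX, hYX⟩ := main_disjoint ha hba hA hB hYk hnl
    have hXA' : X ∈ Lfam n A' a := by
      rw [Lfam, Finset.mem_filter] at hX ⊢
      exact ⟨hX.1, lexLE_trans hX.2 hlex⟩
    have h2 := hcross Y hY𝒴 X hXA'
    rw [hYX] at h2
    exact Finset.not_nonempty_empty h2
  constructor
  · unfold pairMaximal
    rw [hA'card, hBcard]
    exact ⟨crossA'B, hmax1, hmax2⟩
  · exact hlex
end

section
/- Let a, b, k, n be positive integers with n ≥ max{a+k, b+k}. Let A, B ⊆ [n] with |A| = a, |B| = b, and let K_a, K_b be the k-partners of A and B respectively. If A ≼ B in lex order, then K_b ≼ K_a. Moreover, if A is the a-parity of B (A \ A^t = B \ B^t and ℓ(B) − ℓ(A) = b − a), then K_a = K_b. -/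
open Finset

lemma lexLE_char (X Y : Finset ℕ) :
    lexLE X Y ↔ X = Y ∨ ∃ m, m ∈ X ∧ m ∉ Y ∧ ∀ t, t < m → (t ∈ X ↔ t ∈ Y) := by
  constructor
  · rintro (hYX | hmin)
    · by_cases hXY : X = Y
      · exact Or.inl hXY
      · refine Or.inr ?_
        have hne : (X \ Y).Nonempty := by
          rw [sdiff_nonempty]
          intro h
          exact hXY (Finset.Subset.antisymm h hYX)
        refine ⟨(X \ Y).min' hne, ?_, ?_, ?_⟩
        · exact (mem_sdiff.1 ((X \ Y).min'_mem hne)).1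
        · exact (mem_sdiff.1 ((X \ Y).min'_mem hne)).2
        · intro t ht
          constructor
          · intro htX
            by_contra htY
            exact absurd (Finset.min'_le _ t (mem_sdiff.2 ⟨htX, htY⟩)) (not_le.2 ht)
          · exact fun htY => hYX htY
    · have hne : (X \ Y).Nonempty := by
        by_contra h
        rw [not_nonempty_iff_eq_empty] at h
        rw [h] at hmin
        simp at hmin
      refine Or.inr ⟨(X \ Y).min' hne, (mem_sdiff.1 ((X \ Y).min'_mem hne)).1,
        (mem_sdiff.1 ((X \ Y).min'_mem hne)).2, ?_⟩
      intro t ht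
      constructor
      · intro htX
        by_contra htY
        exact absurd (Finset.min'_le _ t (mem_sdiff.2 ⟨htX, htY⟩)) (not_le.2 ht)
      · intro htY
        by_contra htX
        have h1 : (Y \ X).min ≤ (t : ℕ∞) := Finset.min_le (mem_sdiff.2 ⟨htY, htX⟩)
        have h2 : ((X \ Y).min' hne : ℕ∞) = (X \ Y).min := Finset.coe_min' hne
        have h3 : ((X \ Y).min' hne : ℕ∞) < (Y \ X).min := h2 ▸ hmin
        have h4 : ¬ ((t:ℕ∞) < ((X \ Y).min' hne : ℕ∞)) := by
          intro h; exact absurd (lt_trans h h3) (not_lt.2 h1)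
        rw [Nat.cast_lt] at h4
        exact h4 ht
  · rintro (rfl | ⟨m, hmX, hmY, hagree⟩)
    · exact Or.inl (Finset.Subset.refl _)
    · by_cases hYX : Y ⊆ X
      · exact Or.inl hYX
      · refine Or.inr ?_
        have hne : (Y \ X).Nonempty := by
          rw [sdiff_nonempty]; exact hYX
        have h1 : (X \ Y).min ≤ (m : ℕ∞) := Finset.min_le (mem_sdiff.2 ⟨hmX, hmY⟩)
        have h2 : (m:ℕ∞) < (Y \ X).min := by
          rw [← Finset.coe_min' hne]
          have hlt : m < (Y \ X).min' hne := by
            set t0 := (Y \ X).min' hne with ht0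
            have ht0m : t0 ∈ Y \ X := (Y \ X).min'_mem hne
            rw [mem_sdiff] at ht0m
            rcases lt_trichotomy m t0 with h | h | h
            · exact h
            · exact absurd (h ▸ hmX) ht0m.2
            · exact absurd ((hagree t0 h).2 ht0m.1) ht0m.2
          exact WithTop.coe_lt_coe.2 hlt
        exact lt_of_le_of_lt h1 h2

lemma lexLE_refl (X : Finset ℕ) : lexLE X X := Or.inl (Finset.Subset.refl _)

lemma lexLE_trans_s13 {X Y Z : Finset ℕ} (h1 : lexLE X Y) (h2 : lexLE Y Z) : lexLE X Z := by
  rw [lexLE_char] at h1 h2 ⊢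
  rcases h1 with rfl | ⟨m1, hm1X, hm1Y, hag1⟩
  · exact h2
  rcases h2 with rfl | ⟨m2, hm2Y, hm2Z, hag2⟩
  · exact Or.inr ⟨m1, hm1X, hm1Y, hag1⟩
  have hne : m1 ≠ m2 := by rintro rfl; exact hm1Y hm2Y
  rcases hne.lt_or_gt with h | h
  · refine Or.inr ⟨m1, hm1X, fun hZ => hm1Y ((hag2 m1 h).2 hZ), fun t ht => ?_⟩
    exact (hag1 t ht).trans (hag2 t (ht.trans h))
  · refine Or.inr ⟨m2, (hag1 m2 h).2 hm2Y, hm2Z, fun t ht => ?_⟩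
    exact (hag1 t (ht.trans h)).trans (hag2 t ht)

lemma lexLE_antisymm {X Y : Finset ℕ} (h1 : lexLE X Y) (h2 : lexLE Y X) : X = Y := by
  rw [lexLE_char] at h1 h2
  rcases h1 with rfl | ⟨m1, hm1X, hm1Y, hag1⟩
  · rfl
  rcases h2 with rfl | ⟨m2, hm2Y, hm2X, hag2⟩
  · rfl
  have hne : m1 ≠ m2 := by rintro rfl; exact hm1Y hm2Y
  rcases hne.lt_or_gt with h | h
  · exact absurd ((hag2 m1 h).2 hm1X) hm1Y
  · exact absurd ((hag1 m2 h).2 hm2Y) hm2X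

lemma count_lt {n m : ℕ} {K K' : Finset ℕ} (hK' : K' ⊆ Finset.Icc 1 n)
    (hmK : Finset.Icc m n ⊆ K) (hmn : m ≤ n) (hmK' : m ∉ K')
    (hag : ∀ t, t < m → (t ∈ K' ↔ t ∈ K)) : K'.card < K.card := by
  have hsub : K' ⊆ (K ∩ Finset.Iio m) ∪ Finset.Icc (m+1) n := by
    intro x hx
    rcases lt_trichotomy x m with h | rfl | h
    · exact Finset.mem_union_left _ (Finset.mem_inter.2 ⟨(hag x h).1 hx, Finset.mem_Iio.2 h⟩)
    · exact absurd hx hmK'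
    · exact Finset.mem_union_right _ (Finset.mem_Icc.2 ⟨h, (Finset.mem_Icc.1 (hK' hx)).2⟩)
  have hsub2 : (K ∩ Finset.Iio m) ∪ Finset.Icc m n ⊆ K := by
    intro x hx
    rcases Finset.mem_union.1 hx with h | h
    · exact (Finset.mem_inter.1 h).1
    · exact hmK h
  have hd1 : Disjoint (K ∩ Finset.Iio m) (Finset.Icc (m+1) n) := by
    rw [Finset.disjoint_left]
    intro x hx hx2
    have := Finset.mem_Iio.1 (Finset.mem_inter.1 hx).2
    have := (Finset.mem_Icc.1 hx2).1
    omega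
  have hd2 : Disjoint (K ∩ Finset.Iio m) (Finset.Icc m n) := by
    rw [Finset.disjoint_left]
    intro x hx hx2
    have := Finset.mem_Iio.1 (Finset.mem_inter.1 hx).2
    have := (Finset.mem_Icc.1 hx2).1
    omega
  have h1 : K'.card ≤ (K ∩ Finset.Iio m).card + (n - m) := by
    calc K'.card ≤ ((K ∩ Finset.Iio m) ∪ Finset.Icc (m+1) n).card := Finset.card_le_card hsub
    _ = (K ∩ Finset.Iio m).card + (Finset.Icc (m+1) n).card := Finset.card_union_of_disjoint hd1
    _ = (K ∩ Finset.Iio m).card + (n - m) := by rw [Nat.card_Icc]; omega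
  have h2 : (K ∩ Finset.Iio m).card + (n - m + 1) ≤ K.card := by
    calc (K ∩ Finset.Iio m).card + (n - m + 1) = (K ∩ Finset.Iio m).card + (Finset.Icc m n).card := by
          rw [Nat.card_Icc]; omega
    _ = ((K ∩ Finset.Iio m) ∪ Finset.Icc m n).card := (Finset.card_union_of_disjoint hd2).symm
    _ ≤ K.card := Finset.card_le_card hsub2
  omega

lemma mem_ksubsets {n k : ℕ} {F : Finset ℕ} :
    F ∈ ksubsets n k ↔ F ⊆ Finset.Icc 1 n ∧ F.card = k := Finset.mem_powersetCard

lemma partner_spec {F H : Finset ℕ} (h : isPartner F H) :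
    ∃ q, q ∈ F ∧ F ⊆ Finset.Icc 1 q ∧
      (∀ x, x ∈ H ↔ ((1 ≤ x ∧ x ≤ q ∧ x ∉ F) ∨ x = q)) ∧ H.card + F.card = q + 1 := by
  obtain ⟨q, hint, hun⟩ := h
  have hqF : q ∈ F := by
    have : q ∈ F ∩ H := hint ▸ Finset.mem_singleton_self q
    exact (Finset.mem_inter.1 this).1
  have hqH : q ∈ H := by
    have : q ∈ F ∩ H := hint ▸ Finset.mem_singleton_self q
    exact (Finset.mem_inter.1 this).2
  have hFq : F ⊆ Finset.Icc 1 q := hun ▸ Finset.subset_union_left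
  have hHq : H ⊆ Finset.Icc 1 q := hun ▸ Finset.subset_union_right
  refine ⟨q, hqF, hFq, fun x => ?_, ?_⟩
  · constructor
    · intro hx
      by_cases hxq : x = q
      · exact Or.inr hxq
      · have hx1 := Finset.mem_Icc.1 (hHq hx)
        refine Or.inl ⟨hx1.1, hx1.2, fun hxF => hxq ?_⟩
        have : x ∈ F ∩ H := Finset.mem_inter.2 ⟨hxF, hx⟩
        rw [hint, Finset.mem_singleton] at this
        exact this
    · rintro (⟨h1, h2, h3⟩ | rfl)
      · have : x ∈ F ∪ H := hun.symm ▸ Finset.mem_Icc.2 ⟨h1, h2⟩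
        rcases Finset.mem_union.1 this with h | h
        · exact absurd h h3
        · exact h
      · exact hqH
  · have := Finset.card_union_add_card_inter F H
    rw [hint, hun, Finset.card_singleton, Nat.card_Icc] at this
    have hq1 : 1 ≤ q := (Finset.mem_Icc.1 (hFq hqF)).1
    omega

lemma partner_unique {F H1 H2 : Finset ℕ} (h1 : isPartner F H1) (h2 : isPartner F H2) :
    H1 = H2 := by
  obtain ⟨q1, hq1F, hFq1, hmem1, _⟩ := partner_spec h1
  obtain ⟨q2, hq2F, hFq2, hmem2, _⟩ := partner_spec h2
  have hq : q1 = q2 :=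
    le_antisymm ((Finset.mem_Icc.1 (hFq2 hq1F)).2) ((Finset.mem_Icc.1 (hFq1 hq2F)).2)
  subst hq
  ext x
  rw [hmem1, hmem2]

lemma symmdiff_min {X Y : Finset ℕ} (hne : X ≠ Y) :
    ∃ m, (m ∈ X ∧ m ∉ Y ∨ m ∈ Y ∧ m ∉ X) ∧ ∀ t, t < m → (t ∈ X ↔ t ∈ Y) := by
  have hD : ((X \ Y) ∪ (Y \ X)).Nonempty := by
    by_contra h
    rw [Finset.not_nonempty_iff_eq_empty, Finset.union_eq_empty, Finset.sdiff_eq_empty_iff_subset,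
      Finset.sdiff_eq_empty_iff_subset] at h
    exact hne (Finset.Subset.antisymm h.1 h.2)
  set m := ((X \ Y) ∪ (Y \ X)).min' hD with hm
  have hmmem := ((X \ Y) ∪ (Y \ X)).min'_mem hD
  refine ⟨m, ?_, ?_⟩
  · rcases Finset.mem_union.1 hmmem with h | h
    · exact Or.inl ⟨(mem_sdiff.1 h).1, (mem_sdiff.1 h).2⟩
    · exact Or.inr ⟨(mem_sdiff.1 h).1, (mem_sdiff.1 h).2⟩
  · intro t ht
    constructor
    · intro htX
      by_contra htY
      exact absurd (Finset.min'_le _ t (Finset.mem_union_left _ (mem_sdiff.2 ⟨htX, htY⟩)))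
        (not_le.2 ht)
    · intro htY
      by_contra htX
      exact absurd (Finset.min'_le _ t (Finset.mem_union_right _ (mem_sdiff.2 ⟨htY, htX⟩)))
        (not_le.2 ht)

lemma kpartner_char {n k f : ℕ} {F K H : Finset ℕ} (hF : F ⊆ Finset.Icc 1 n)
    (hFc : F.card = f) (hf : 1 ≤ f) (hk : 1 ≤ k) (hfk : f + k ≤ n)
    (hKP : isKPartner n F k K) (hH : isPartner F H) :
    K ∈ ksubsets n k ∧ lexLE K H ∧ ∀ K' ∈ ksubsets n k, lexLE K' H → lexLE K' K := by
  obtain ⟨H', hH', hc⟩ := hKP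
  rw [show H' = H from partner_unique hH' hH] at hc
  obtain ⟨q, hqF, hFq, hmemH, hcard⟩ := partner_spec hH
  have hqn : q ≤ n := (Finset.mem_Icc.1 (hF hqF)).2
  have hq1 : 1 ≤ q := (Finset.mem_Icc.1 (hF hqF)).1
  have hHsub : H ⊆ Finset.Icc 1 n := by
    intro x hx
    rcases (hmemH x).1 hx with ⟨h1, h2, _⟩ | rfl
    · exact Finset.mem_Icc.2 ⟨h1, h2.trans hqn⟩
    · exact Finset.mem_Icc.2 ⟨hq1, hqn⟩
  have hHcard : H.card + f = q + 1 := by rw [← hFc]; exact hcard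
  rcases hc with ⟨hkeq, rfl⟩ | ⟨hlt, rfl⟩ | ⟨hgt, h1, h2, h3⟩
  · -- k = H.card
    refine ⟨mem_ksubsets.2 ⟨hHsub, hkeq.symm⟩, lexLE_refl _, fun K' _ h => h⟩
  · -- H.card < k, K = H ∪ T
    set h := H.card with hh
    set T := Finset.Icc (n - k + h + 1) n with hT
    have hqT : q < n - k + h + 1 := by omega
    have hdisj : Disjoint H T := by
      rw [Finset.disjoint_left]
      intro x hx hxT
      have hxq : x ≤ q := by
        rcases (hmemH x).1 hx with ⟨_, h2, _⟩ | rfl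
        · exact h2
        · exact le_refl _
      have := (Finset.mem_Icc.1 hxT).1
      omega
    have hTcard : T.card = k - h := by rw [hT, Nat.card_Icc]; omega
    have hKcard : (H ∪ T).card = k := by
      rw [Finset.card_union_of_disjoint hdisj, hTcard]; omega
    have hKsub : H ∪ T ⊆ Finset.Icc 1 n := by
      apply Finset.union_subset hHsub
      intro x hx
      have := Finset.mem_Icc.1 hx
      exact Finset.mem_Icc.2 ⟨by omega, this.2⟩
    refine ⟨mem_ksubsets.2 ⟨hKsub, hKcard⟩, Or.inl Finset.subset_union_left, ?_⟩
    intro K' hK' hlex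
    obtain ⟨hK'sub, hK'card⟩ := mem_ksubsets.1 hK'
    rw [lexLE_char] at hlex
    rcases hlex with rfl | ⟨m, hmK', hmH, hag⟩
    · omega
    by_cases hKK : K' = H ∪ T
    · exact hKK ▸ lexLE_refl _
    obtain ⟨m2, hm2mem, hag2⟩ := symmdiff_min hKK
    rcases hm2mem with ⟨hm2K', hm2K⟩ | ⟨hm2K, hm2K'⟩
    · exact (lexLE_char _ _).2 (Or.inr ⟨m2, hm2K', hm2K, hag2⟩)
    · exfalso
      rcases Finset.mem_union.1 hm2K with hm2H | hm2T
      · -- m2 ∈ H : compare with m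
        rcases lt_trichotomy m2 m with hc | rfl | hc
        · exact hm2K' ((hag m2 hc).2 hm2H)
        · exact hm2K' hmK'
        · -- m < m2
          have hmK : m ∈ H ∪ T := (hag2 m hc).1 hmK'
          have hmT : m ∈ T := by
            rcases Finset.mem_union.1 hmK with h | h
            · exact absurd h hmH
            · exact h
          have : m2 ≤ q := by
            rcases (hmemH m2).1 hm2H with ⟨_, h2, _⟩ | rfl
            · exact h2
            · exact le_refl _
          have := (Finset.mem_Icc.1 hmT).1
          omega
      · -- m2 ∈ T : counting contradiction
        have hsub : Finset.Icc m2 n ⊆ H ∪ T := by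
          intro x hx
          apply Finset.mem_union_right
          have h1 := Finset.mem_Icc.1 hx
          have h2 := Finset.mem_Icc.1 hm2T
          exact Finset.mem_Icc.2 ⟨by omega, h1.2⟩
        have hm2n : m2 ≤ n := (Finset.mem_Icc.1 hm2T).2
        have := count_lt hK'sub hsub hm2n hm2K' hag2
        omega
  · -- k < H.card : given directly
    exact ⟨h1, h2, h3⟩

lemma partner_antitone {A B HA HB : Finset ℕ} (hHA : isPartner A HA) (hHB : isPartner B HB)
    (hAB : lexLE A B) : lexLE HB HA := by
  obtain ⟨qA, hqAA, hAqA, hmemA, _⟩ := partner_spec hHA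
  obtain ⟨qB, hqBB, hBqB, hmemB, _⟩ := partner_spec hHB
  rw [lexLE_char] at hAB
  rcases hAB with rfl | ⟨m, hmA, hmB, hag⟩
  · rw [partner_unique hHB hHA]; exact lexLE_refl _
  have hmqA : m ≤ qA := (Finset.mem_Icc.1 (hAqA hmA)).2
  have hm1 : 1 ≤ m := (Finset.mem_Icc.1 (hAqA hmA)).1
  have hmne : m ≠ qB := by rintro rfl; exact hmB hqBB
  rcases lt_or_ge qB m with hc | hc
  · -- qB < m
    refine (lexLE_char _ _).2 (Or.inr ⟨qB, (hmemB qB).2 (Or.inr rfl), ?_, ?_⟩)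
    · intro h
      rcases (hmemA qB).1 h with ⟨_, _, h3⟩ | rfl
      · exact h3 ((hag qB hc).2 hqBB)
      · omega
    · intro t ht
      have htm : t < m := ht.trans hc
      constructor
      · intro h
        rcases (hmemB t).1 h with ⟨h1, h2, h3⟩ | rfl
        · exact (hmemA t).2 (Or.inl ⟨h1, by omega, fun hA => h3 ((hag t htm).1 hA)⟩)
        · omega
      · intro h
        rcases (hmemA t).1 h with ⟨h1, h2, h3⟩ | rfl
        · exact (hmemB t).2 (Or.inl ⟨h1, by omega, fun hB => h3 ((hag t htm).2 hB)⟩)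
        · omega
  · -- m < qB
    have hmqB : m < qB := lt_of_le_of_ne hc hmne
    rcases lt_or_eq_of_le hmqA with hmlt | hmeq
    · -- m < qA
      refine (lexLE_char _ _).2 (Or.inr ⟨m, (hmemB m).2 (Or.inl ⟨hm1, by omega, hmB⟩), ?_, ?_⟩)
      · intro h
        rcases (hmemA m).1 h with ⟨_, _, h3⟩ | rfl
        · exact h3 hmA
        · omega
      · intro t ht
        constructor
        · intro h
          rcases (hmemB t).1 h with ⟨h1, h2, h3⟩ | rfl
          · exact (hmemA t).2 (Or.inl ⟨h1, by omega, fun hA => h3 ((hag t ht).1 hA)⟩)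
          · omega
        · intro h
          rcases (hmemA t).1 h with ⟨h1, h2, h3⟩ | rfl
          · exact (hmemB t).2 (Or.inl ⟨h1, by omega, fun hB => h3 ((hag t ht).2 hB)⟩)
          · omega
    · -- m = qA : HA ⊆ HB
      refine Or.inl ?_
      intro x hx
      rcases (hmemA x).1 hx with ⟨h1, h2, h3⟩ | rfl
      · have hxm : x < m := by
          rcases lt_or_eq_of_le (hmeq ▸ h2 : x ≤ m) with h | rfl
          · exact h
          · exact absurd hmA h3
        exact (hmemB x).2 (Or.inl ⟨h1, by omega, fun hB => h3 ((hag x hxm).2 hB)⟩)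
      · exact (hmemB x).2 (Or.inl ⟨by omega, by omega, hmeq ▸ hmB⟩)

lemma tailLen_le_n (n : ℕ) (F : Finset ℕ) : tailLen n F ≤ n := by
  apply Finset.sup_le
  intro x hx
  have := Finset.mem_range.1 (Finset.mem_filter.1 hx).1
  simp only [id]
  omega

lemma tail_subset (n : ℕ) (F : Finset ℕ) : Finset.Icc (n - tailLen n F + 1) n ⊆ F := by
  have hne : ((Finset.range (n + 1)).filter (fun x => Finset.Icc (n - x + 1) n ⊆ F)).Nonempty := by
    refine ⟨0, Finset.mem_filter.2 ⟨Finset.mem_range.2 (by omega), ?_⟩⟩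
    simp [Finset.Icc_eq_empty_of_lt (by omega : n < n + 1)]
  obtain ⟨x, hx, hsup⟩ := Finset.exists_mem_eq_sup _ hne id
  rw [tailLen, hsup]
  exact (Finset.mem_filter.1 hx).2

lemma tailLen_card_le (n : ℕ) (F : Finset ℕ) : tailLen n F ≤ F.card := by
  have h1 := Finset.card_le_card (tail_subset n F)
  rw [Nat.card_Icc] at h1
  have := tailLen_le_n n F
  omega

lemma tail_notmem (n : ℕ) (F : Finset ℕ) (h : tailLen n F < n) : n - tailLen n F ∉ F := by
  intro hmem
  have hx : tailLen n F + 1 ∈ (Finset.range (n + 1)).filter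
      (fun x => Finset.Icc (n - x + 1) n ⊆ F) := by
    refine Finset.mem_filter.2 ⟨Finset.mem_range.2 (by omega), ?_⟩
    intro y hy
    have hy2 := Finset.mem_Icc.1 hy
    rcases eq_or_lt_of_le hy2.1 with heq | hlt
    · have : y = n - tailLen n F := by omega
      exact this ▸ hmem
    · exact tail_subset n F (Finset.mem_Icc.2 ⟨by omega, hy2.2⟩)
  have := Finset.le_sup (f := id) hx
  rw [← tailLen] at this
  simp at this

lemma parity_key {n k a b : ℕ} {A B Ka Kb : Finset ℕ}
    (ha : 1 ≤ a) (hb : 1 ≤ b) (hk : 1 ≤ k) (hn1 : a + k ≤ n) (hn2 : b + k ≤ n)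
    (hA : A ∈ ksubsets n a) (hB : B ∈ ksubsets n b)
    (hKa : isKPartner n A k Ka) (hKb : isKPartner n B k Kb)
    (hS : A \ tailSet n A = B \ tailSet n B)
    (hl : tailLen n A ≤ tailLen n B) : Ka = Kb := by
  obtain ⟨hAsub, hAc⟩ := mem_ksubsets.1 hA
  obtain ⟨hBsub, hBc⟩ := mem_ksubsets.1 hB
  obtain ⟨HA, hHA, -⟩ := id hKa
  obtain ⟨HB, hHB, -⟩ := id hKb
  set lA := tailLen n A with hlA
  set lB := tailLen n B with hlB
  have hS' : A \ Finset.Icc (n - lA + 1) n = B \ Finset.Icc (n - lB + 1) n := hS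
  have hlAa : lA ≤ a := hAc ▸ tailLen_card_le n A
  have hlBb : lB ≤ b := hBc ▸ tailLen_card_le n B
  have hlAn : lA < n := by omega
  have hlBn : lB < n := by omega
  have htailA : Finset.Icc (n - lA + 1) n ⊆ A := tail_subset n A
  have htailB : Finset.Icc (n - lB + 1) n ⊆ B := tail_subset n B
  have hnotA : n - lA ∉ A := tail_notmem n A hlAn
  have hnotB : n - lB ∉ B := tail_notmem n B hlBn
  obtain ⟨qA, hqAA, hAqA, hmemA, hcardA⟩ := partner_spec hHA
  obtain ⟨qB, hqBB, hBqB, hmemB, hcardB⟩ := partner_spec hHB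
  have hqAn : qA ≤ n := (Finset.mem_Icc.1 (hAsub hqAA)).2
  have hqBn : qB ≤ n := (Finset.mem_Icc.1 (hBsub hqBB)).2
  have hdecomp : ∀ (C : Finset ℕ) (l : ℕ), Finset.Icc (n - l + 1) n ⊆ C →
      ∀ x, (x ∈ C ↔ x ∈ C \ Finset.Icc (n - l + 1) n ∨ x ∈ Finset.Icc (n - l + 1) n) := by
    intro C l hsub x
    constructor
    · intro hx
      by_cases h : x ∈ Finset.Icc (n - l + 1) n
      · exact Or.inr h
      · exact Or.inl (Finset.mem_sdiff.2 ⟨hx, h⟩)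
    · rintro (h | h)
      · exact (Finset.mem_sdiff.1 h).1
      · exact hsub h
  suffices hkey : lexLE HA HB ∧
      (∀ K', K' ⊆ Finset.Icc 1 n → K'.card = k → lexLE K' HB → lexLE K' HA) by
    obtain ⟨hα, hβ⟩ := hkey
    have MA := kpartner_char hAsub hAc ha hk hn1 hKa hHA
    have MB := kpartner_char hBsub hBc hb hk hn2 hKb hHB
    have h1 : lexLE Ka Kb := MB.2.2 Ka MA.1 (lexLE_trans_s13 MA.2.1 hα)
    have h2 : lexLE Kb Ka :=
      MA.2.2 Kb MB.1 (hβ Kb (mem_ksubsets.1 MB.1).1 (mem_ksubsets.1 MB.1).2 MB.2.1)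
    exact lexLE_antisymm h1 h2
  rcases eq_or_lt_of_le hl with heq | hlt
  · -- lA = lB : A = B
    have hABeq : A = B := by
      ext x
      rw [hdecomp A lA htailA x, hdecomp B lB htailB x, hS', heq]
    have hHB' : isPartner A HB := by rw [hABeq]; exact hHB
    have hHeq : HA = HB := partner_unique hHA hHB'
    rw [hHeq]
    exact ⟨lexLE_refl _, fun K' _ _ h => h⟩
  · -- lA < lB
    have hlB1 : 1 ≤ lB := by omega
    have hnB : n ∈ B := htailB (Finset.mem_Icc.2 ⟨by omega, le_refl n⟩)
    have hqB : qB = n := le_antisymm hqBn ((Finset.mem_Icc.1 (hBqB hnB)).2)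
    have hmemB' : ∀ x, x ∈ HB ↔ (1 ≤ x ∧ x ≤ n ∧ x ∉ B) ∨ x = n := by
      intro x; rw [hmemB x, hqB]
    have hHBcard : HB.card + b = n + 1 := by
      rw [hBc, hqB] at hcardB; exact hcardB
    have hcount : ∀ K', K' ⊆ Finset.Icc 1 n → K'.card = k → ∀ m', m' ∈ K' → m' ∉ HB →
        (∀ t, t < m' → (t ∈ K' ↔ t ∈ HB)) → n - lB + 1 ≤ m' → False := by
      intro K' hK's hK'c m' hm'K hm'HB hag hge
      have hWsub : (HB \ Finset.Icc (n - lB + 1) n) ∪ {m'} ⊆ K' := by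
        intro x hx
        rcases Finset.mem_union.1 hx with h | h
        · obtain ⟨hxHB, hxT⟩ := Finset.mem_sdiff.1 h
          have hxlt : x < m' := by
            rcases (hmemB' x).1 hxHB with ⟨h1, h2, h3⟩ | heqn
            · have : ¬(n - lB + 1 ≤ x ∧ x ≤ n) := by simpa [Finset.mem_Icc] using hxT
              omega
            · rw [heqn] at hxT
              exact absurd (Finset.mem_Icc.2 ⟨by omega, le_refl n⟩) hxT
          exact (hag x hxlt).2 hxHB
        · exact (Finset.mem_singleton.1 h) ▸ hm'K
      have hdisj : Disjoint (HB \ Finset.Icc (n - lB + 1) n) {m'} :=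
        Finset.disjoint_singleton_right.2 (fun h => hm'HB (Finset.mem_sdiff.1 h).1)
      have hinter : HB ∩ Finset.Icc (n - lB + 1) n = {n} := by
        ext x
        simp only [Finset.mem_inter, Finset.mem_singleton, Finset.mem_Icc]
        constructor
        · rintro ⟨hxHB, hx1, hx2⟩
          rcases (hmemB' x).1 hxHB with ⟨_, _, h3⟩ | heqn
          · exact absurd (htailB (Finset.mem_Icc.2 ⟨hx1, hx2⟩)) h3
          · exact heqn
        · intro hxeq
          refine ⟨?_, by omega, by omega⟩
          rw [hxeq]
          exact (hmemB' n).2 (Or.inr rfl)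
      have hWcard : (HB \ Finset.Icc (n - lB + 1) n).card + 1 = HB.card := by
        have h := Finset.card_sdiff_add_card_inter HB (Finset.Icc (n - lB + 1) n)
        rw [hinter, Finset.card_singleton] at h
        exact h
      have hle := Finset.card_le_card hWsub
      rw [Finset.card_union_of_disjoint hdisj, Finset.card_singleton, hK'c] at hle
      omega
    have hmB_of : ∀ m', 1 ≤ m' → m' ≤ n → m' ∉ HB → m' ∈ B := by
      intro m' h1 h2 hm'HB
      by_contra h
      rcases eq_or_ne m' n with rfl | hne
      · exact hm'HB ((hmemB' m').2 (Or.inr rfl))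
      · exact hm'HB ((hmemB' m').2 (Or.inl ⟨h1, h2, h⟩))
    rcases Nat.eq_zero_or_pos lA with hlA0 | hlA1
    · -- lA = 0 : A = B \ tail
      have hSA : A \ Finset.Icc (n - lA + 1) n = A := by
        rw [hlA0, Nat.sub_zero, Finset.Icc_eq_empty (by omega : ¬ n + 1 ≤ n), Finset.sdiff_empty]
      have hS'' : A = B \ Finset.Icc (n - lB + 1) n := by rw [← hSA, hS']
      have hSboundA : ∀ x ∈ A, x ≤ n - lB - 1 := by
        intro x hx
        rw [hS''] at hx
        obtain ⟨hxB, hxT⟩ := Finset.mem_sdiff.1 hx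
        have hxn := (Finset.mem_Icc.1 (hBsub hxB)).2
        have h2 : ¬(n - lB + 1 ≤ x ∧ x ≤ n) := by simpa [Finset.mem_Icc] using hxT
        have h3 : x ≠ n - lB := fun h => hnotB (h ▸ hxB)
        omega
      have hqAbound : qA ≤ n - lB - 1 := hSboundA qA hqAA
      have hASubB : A ⊆ B := by
        intro x hx
        rw [hS''] at hx
        exact (Finset.mem_sdiff.1 hx).1
      have hmemAB : ∀ t, t ∈ B → t ≤ n - lB - 1 → t ∈ A := by
        intro t ht hle
        rw [hS'']
        refine Finset.mem_sdiff.2 ⟨ht, ?_⟩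
        simp only [Finset.mem_Icc]
        omega
      have hagAB : ∀ t, t < qA → (t ∈ HA ↔ t ∈ HB) := by
        intro t ht
        have htn : t < n := by omega
        constructor
        · intro h
          rcases (hmemA t).1 h with ⟨h1, h2, h3⟩ | rfl
          · exact (hmemB' t).2 (Or.inl ⟨h1, by omega, fun hB2 => h3 (hmemAB t hB2 (by omega))⟩)
          · omega
        · intro h
          rcases (hmemB' t).1 h with ⟨h1, h2, h3⟩ | rfl
          · exact (hmemA t).2 (Or.inl ⟨h1, by omega, fun hA2 => h3 (hASubB hA2)⟩)
          · omega
      constructor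
      · refine (lexLE_char _ _).2 (Or.inr ⟨qA, (hmemA qA).2 (Or.inr rfl), ?_, hagAB⟩)
        intro h
        rcases (hmemB' qA).1 h with ⟨_, _, h3⟩ | heq2
        · exact h3 (hASubB hqAA)
        · omega
      · intro K' hK's hK'c hlex
        rw [lexLE_char] at hlex
        rcases hlex with rfl | ⟨m', hm'K, hm'HB, hag⟩
        · exfalso; omega
        obtain ⟨hm'1, hm'n⟩ := Finset.mem_Icc.1 (hK's hm'K)
        have hm'B : m' ∈ B := hmB_of m' hm'1 hm'n hm'HB
        by_cases hm'T : n - lB + 1 ≤ m'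
        · exact (hcount K' hK's hK'c m' hm'K hm'HB hag hm'T).elim
        · have hm'bd : m' ≤ n - lB - 1 := by
            have h3 : m' ≠ n - lB := fun h => hnotB (h ▸ hm'B)
            omega
          have hm'A : m' ∈ A := hmemAB m' hm'B hm'bd
          have hm'qA : m' ≤ qA := (Finset.mem_Icc.1 (hAqA hm'A)).2
          rcases eq_or_lt_of_le hm'qA with heq2 | hlt2
          · -- m' = qA : HA ⊆ K'
            refine Or.inl ?_
            intro x hx
            rcases (hmemA x).1 hx with ⟨h1, h2, h3⟩ | rfl
            · have hxlt : x < m' := by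
                rcases eq_or_lt_of_le h2 with rfl | h
                · exact absurd hqAA h3
                · omega
              have hxHB : x ∈ HB := (hmemB' x).2
                (Or.inl ⟨h1, by omega, fun hB2 => h3 (hmemAB x hB2 (by omega))⟩)
              exact (hag x hxlt).2 hxHB
            · exact heq2 ▸ hm'K
          · -- m' < qA
            refine (lexLE_char _ _).2 (Or.inr ⟨m', hm'K, ?_, ?_⟩)
            · intro h
              rcases (hmemA m').1 h with ⟨_, _, h3⟩ | heq3
              · exact h3 hm'A
              · omega
            · intro t ht
              exact (hag t ht).trans (hagAB t (ht.trans hlt2)).symm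
    · -- lA ≥ 1
      have hnA : n ∈ A := htailA (Finset.mem_Icc.2 ⟨by omega, le_refl n⟩)
      have hqA : qA = n := le_antisymm hqAn ((Finset.mem_Icc.1 (hAqA hnA)).2)
      have hmemA' : ∀ x, x ∈ HA ↔ (1 ≤ x ∧ x ≤ n ∧ x ∉ A) ∨ x = n := by
        intro x; rw [hmemA x, hqA]
      have hASubB : A ⊆ B := by
        intro x hx
        rcases (hdecomp A lA htailA x).1 hx with h | h
        · rw [hS'] at h; exact (Finset.mem_sdiff.1 h).1
        · have := Finset.mem_Icc.1 h
          exact htailB (Finset.mem_Icc.2 ⟨by omega, this.2⟩)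
      have hmemAB : ∀ t, t ∈ B → t ≤ n - lB - 1 → t ∈ A := by
        intro t ht hle
        have : t ∈ B \ Finset.Icc (n - lB + 1) n := by
          refine Finset.mem_sdiff.2 ⟨ht, ?_⟩
          simp only [Finset.mem_Icc]
          omega
        rw [← hS'] at this
        exact (Finset.mem_sdiff.1 this).1
      have hagt : ∀ t, t ≤ n - lB - 1 → (t ∈ HB ↔ t ∈ HA) := by
        intro t ht
        have htn : t < n := by omega
        constructor
        · intro h
          rcases (hmemB' t).1 h with ⟨h1, h2, h3⟩ | rfl
          · exact (hmemA' t).2 (Or.inl ⟨h1, h2, fun hA2 => h3 (hASubB hA2)⟩)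
          · omega
        · intro h
          rcases (hmemA' t).1 h with ⟨h1, h2, h3⟩ | rfl
          · exact (hmemB' t).2 (Or.inl ⟨h1, h2, fun hB2 => h3 (hmemAB t hB2 ht)⟩)
          · omega
      constructor
      · refine Or.inl ?_
        intro x hx
        rcases (hmemB' x).1 hx with ⟨h1, h2, h3⟩ | rfl
        · exact (hmemA' x).2 (Or.inl ⟨h1, h2, fun hA2 => h3 (hASubB hA2)⟩)
        · exact (hmemA' x).2 (Or.inr rfl)
      · intro K' hK's hK'c hlex
        rw [lexLE_char] at hlex
        rcases hlex with rfl | ⟨m', hm'K, hm'HB, hag⟩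
        · exfalso; omega
        obtain ⟨hm'1, hm'n⟩ := Finset.mem_Icc.1 (hK's hm'K)
        have hm'B : m' ∈ B := hmB_of m' hm'1 hm'n hm'HB
        by_cases hm'T : n - lB + 1 ≤ m'
        · exact (hcount K' hK's hK'c m' hm'K hm'HB hag hm'T).elim
        · have hm'bd : m' ≤ n - lB - 1 := by
            have h3 : m' ≠ n - lB := fun h => hnotB (h ▸ hm'B)
            omega
          have hm'A : m' ∈ A := hmemAB m' hm'B hm'bd
          refine (lexLE_char _ _).2 (Or.inr ⟨m', hm'K, ?_, ?_⟩)
          · intro h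
            rcases (hmemA' m').1 h with ⟨_, _, h3⟩ | heq3
            · exact h3 hm'A
            · omega
          · intro t ht
            exact (hag t ht).trans (hagt t (by omega))

theorem stmt13 (a b k n : ℕ) (ha : 1 ≤ a) (hb : 1 ≤ b) (hk : 1 ≤ k)
    (hn1 : a + k ≤ n) (hn2 : b + k ≤ n)
    (A B Ka Kb : Finset ℕ) (hA : A ∈ ksubsets n a) (hB : B ∈ ksubsets n b)
    (hKa : isKPartner n A k Ka) (hKb : isKPartner n B k Kb) :
    (lexLE A B → lexLE Kb Ka) ∧ (isParity n A B → Ka = Kb) := by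
  constructor
  · intro hAB
    obtain ⟨hAsub, hAc⟩ := mem_ksubsets.1 hA
    obtain ⟨hBsub, hBc⟩ := mem_ksubsets.1 hB
    obtain ⟨HA, hHA, -⟩ := id hKa
    obtain ⟨HB, hHB, -⟩ := id hKb
    have MA := kpartner_char hAsub hAc ha hk hn1 hKa hHA
    have MB := kpartner_char hBsub hBc hb hk hn2 hKb hHB
    have hP := partner_antitone hHA hHB hAB
    exact MA.2.2 Kb MB.1 (lexLE_trans_s13 MB.2.1 hP)
  · intro hp
    rcases le_total (tailLen n A) (tailLen n B) with h | h
    · exact parity_key ha hb hk hn1 hn2 hA hB hKa hKb hp.1 h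
    · exact (parity_key hb ha hk hn2 hn1 hB hA hKb hKa hp.1.symm h).symm
end

section
/- Let t ≥ 3, k₁ ≥ ⋯ ≥ k_t with k_t = 1, and k₁ + k₃ ≤ n < k₁ + k₂. If ℱ₁,…,ℱ_t are nonempty pairwise cross intersecting with ℱᵢ ⊆ binomial([n],kᵢ), and |ℱ_t| = s, then Σᵢ |ℱᵢ| ≤ Σᵢ₌₁^{t−1} C(n−s, kᵢ−s) + s ≤ Σᵢ₌₁ᵗ C(n−1, kᵢ−1), and the total equals Σᵢ C(n−1,kᵢ−1) only if s = 1. -/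
open Finset

lemma chooseAux (m j : ℕ) (hj : j < m) : ∀ d, d ≤ j →
    (m - d).choose (j - d) + d ≤ m.choose j := by
  intro d
  induction d with
  | zero => simp
  | succ d ih =>
    intro hd
    have h2 := ih (by omega)
    have h1 : (m - (d + 1)).choose (j - (d + 1)) + 1 ≤ (m - d).choose (j - d) := by
      have e1 : m - d = (m - (d + 1)) + 1 := by omega
      have e2 : j - d = (j - (d + 1)) + 1 := by omega
      rw [e1, e2, Nat.choose_succ_succ]
      simp only [Nat.succ_eq_add_one]
      have : 0 < (m - (d + 1)).choose (j - (d + 1) + 1) := Nat.choose_pos (by omega)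
      omega
    omega

theorem stmt16 (n t : ℕ) (ht : 3 ≤ t) (k : Fin t → ℕ)
    (hmono : ∀ i j : Fin t, i ≤ j → k j ≤ k i)
    (hkt : k ⟨t - 1, by omega⟩ = 1)
    (hn1 : k ⟨0, by omega⟩ + k ⟨2, by omega⟩ ≤ n)
    (hn2 : n < k ⟨0, by omega⟩ + k ⟨1, by omega⟩)
    (F : Fin t → Finset (Finset ℕ))
    (hF : ∀ i, F i ⊆ ksubsets n (k i)) (hne : ∀ i, (F i).Nonempty)
    (hcross : ∀ i j, i ≠ j → crossInt (F i) (F j))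
    (s : ℕ) (hs : (F ⟨t - 1, by omega⟩).card = s) :
    (∑ i, (F i).card ≤
      (∑ i ∈ Finset.univ.filter (fun i : Fin t => (i : ℕ) < t - 1),
        (n - s).choose (k i - s)) + s) ∧
    ((∑ i ∈ Finset.univ.filter (fun i : Fin t => (i : ℕ) < t - 1),
        (n - s).choose (k i - s)) + s ≤ ∑ i, (n - 1).choose (k i - 1)) ∧
    (∑ i, (F i).card = ∑ i, (n - 1).choose (k i - 1) → s = 1) := by
  have hL : t - 1 < t := by omega
  set L : Fin t := ⟨t - 1, hL⟩ with hLdef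
  have hkL : k L = 1 := hkt
  have hsL : (F L).card = s := hs
  set P := Finset.univ.filter (fun i : Fin t => (i : ℕ) < t - 1) with hPdef
  have hsing : ∀ Y ∈ F L, Y.card = 1 ∧ Y ⊆ Finset.Icc 1 n := by
    intro Y hY
    have h := hF L hY
    rw [ksubsets, Finset.mem_powersetCard] at h
    exact ⟨h.2.trans hkL, h.1⟩
  set S : Finset ℕ := (F L).biUnion id with hSdef
  have hdisj : ∀ Y ∈ F L, ∀ Z ∈ F L, Y ≠ Z → Disjoint (id Y) (id Z) := by
    intro Y hY Z hZ hYZ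
    obtain ⟨y, hy⟩ := Finset.card_eq_one.mp (hsing Y hY).1
    obtain ⟨z, hz⟩ := Finset.card_eq_one.mp (hsing Z hZ).1
    subst hy hz
    simp only [id_eq, Finset.disjoint_singleton]
    intro h; exact hYZ (by rw [h])
  have hScard : S.card = s := by
    have h1 : ∀ Y ∈ F L, (id Y).card = 1 := fun Y hY => (hsing Y hY).1
    rw [hSdef, Finset.card_biUnion hdisj, Finset.sum_congr rfl h1,
      Finset.sum_const, smul_eq_mul, mul_one, hsL]
  have hSIcc : S ⊆ Finset.Icc 1 n := by
    intro x hx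
    obtain ⟨Y, hY, hxY⟩ := Finset.mem_biUnion.mp hx
    exact (hsing Y hY).2 hxY
  have hs1 : 1 ≤ s := by
    rw [← hsL]; exact Finset.card_pos.mpr (hne L)
  have hSsub : ∀ i, i ≠ L → ∀ X ∈ F i, S ⊆ X := by
    intro i hi X hX x hx
    obtain ⟨Y, hY, hxY⟩ := Finset.mem_biUnion.mp hx
    obtain ⟨y, hy⟩ := Finset.card_eq_one.mp (hsing Y hY).1
    subst hy
    simp only [id_eq, Finset.mem_singleton] at hxY
    subst hxY
    obtain ⟨z, hz⟩ := hcross i L hi X hX {x} hY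
    rw [Finset.mem_inter, Finset.mem_singleton] at hz
    rw [← hz.2]; exact hz.1
  have hsk : ∀ i, i ≠ L → s ≤ k i := by
    intro i hi
    obtain ⟨X, hX⟩ := hne i
    have h := hF i hX
    rw [ksubsets, Finset.mem_powersetCard] at h
    calc s = S.card := hScard.symm
    _ ≤ X.card := Finset.card_le_card (hSsub i hi X hX)
    _ = k i := h.2
  have hkn : ∀ i : Fin t, k i ≤ n - 1 := by
    intro i
    have h0 : k i ≤ k ⟨0, by omega⟩ := hmono ⟨0, by omega⟩ i (by simp [Fin.le_def])
    have h2 : k L ≤ k ⟨2, by omega⟩ := by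
      apply hmono
      rw [Fin.le_def]
      simp only [hLdef]
      omega
    rw [hkL] at h2
    omega
  have hcount : ∀ i, i ≠ L → (F i).card ≤ (n - s).choose (k i - s) := by
    intro i hi
    have key : (F i).card ≤ ((Finset.Icc 1 n \ S).powersetCard (k i - s)).card := by
      apply Finset.card_le_card_of_injOn (fun X => X \ S)
      · intro X hX
        have h := hF i hX
        rw [ksubsets, Finset.mem_powersetCard] at h
        simp only [Finset.mem_coe, Finset.mem_powersetCard]
        constructor
        · intro x hx
          rw [Finset.mem_sdiff] at hx ⊢
          exact ⟨h.1 hx.1, hx.2⟩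
        · rw [Finset.card_sdiff_of_subset (hSsub i hi X hX), hScard, h.2]
      · intro X hX X' hX' hXX'
        have e1 := Finset.sdiff_union_of_subset (hSsub i hi X hX)
        have e2 := Finset.sdiff_union_of_subset (hSsub i hi X' hX')
        simp only at hXX'
        rw [← e1, ← e2, hXX']
    rwa [Finset.card_powersetCard, Finset.card_sdiff_of_subset hSIcc, Nat.card_Icc, hScard,
      Nat.add_sub_cancel] at key
  have hnotfilt : Finset.univ.filter (fun i : Fin t => ¬ (i : ℕ) < t - 1) = {L} := by
    ext i
    simp only [Finset.mem_filter, Finset.mem_univ, true_and, Finset.mem_singleton,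
      Fin.ext_iff, hLdef]
    have := i.isLt
    constructor <;> intro h <;> omega
  have hPL : ∀ i ∈ P, i ≠ L := by
    intro i hiP
    rw [hPdef, Finset.mem_filter] at hiP
    intro h
    rw [h, hLdef] at hiP
    simp only [Finset.mem_filter, Finset.mem_univ, true_and] at hiP
    omega
  have hPcard : P.card = t - 1 := by
    have h := Finset.card_filter_add_card_filter_not
      (s := (Finset.univ : Finset (Fin t))) (p := fun i : Fin t => (i : ℕ) < t - 1)
    rw [hnotfilt, ← hPdef] at h
    simp only [Finset.card_singleton, Finset.card_univ, Fintype.card_fin] at h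
    omega
  have hsplit : ∀ g : Fin t → ℕ, ∑ i, g i = (∑ i ∈ P, g i) + g L := by
    intro g
    rw [hPdef, ← Finset.sum_filter_add_sum_filter_not Finset.univ
      (fun i : Fin t => (i : ℕ) < t - 1) g, hnotfilt, Finset.sum_singleton]
  have ineq1 : ∑ i ∈ P, (F i).card ≤ ∑ i ∈ P, (n - s).choose (k i - s) :=
    Finset.sum_le_sum (fun i hi => hcount i (hPL i hi))
  have ineq2 : ∑ i ∈ P, ((n - s).choose (k i - s) + (s - 1)) ≤
      ∑ i ∈ P, (n - 1).choose (k i - 1) := by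
    apply Finset.sum_le_sum
    intro i hi
    have hski := hsk i (hPL i hi)
    have hkni := hkn i
    have h := chooseAux (n - 1) (k i - 1) (by omega) (s - 1) (by omega)
    have e1 : n - 1 - (s - 1) = n - s := by omega
    have e2 : k i - 1 - (s - 1) = k i - s := by omega
    rw [e1, e2] at h
    omega
  rw [Finset.sum_add_distrib, Finset.sum_const, hPcard, smul_eq_mul] at ineq2
  have hm2 : 2 * (s - 1) ≤ (t - 1) * (s - 1) := Nat.mul_le_mul_right (s - 1) (by omega)
  have hsum1 : ∑ i, (F i).card = (∑ i ∈ P, (F i).card) + s := by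
    rw [hsplit (fun i => (F i).card)]
    simp only [hsL]
  have hsum2 : ∑ i, (n - 1).choose (k i - 1) =
      (∑ i ∈ P, (n - 1).choose (k i - 1)) + 1 := by
    rw [hsplit (fun i => (n - 1).choose (k i - 1))]
    simp only [hkL]
    norm_num
  rw [hsum1, hsum2]
  set a := ∑ i ∈ P, (F i).card
  set b := ∑ i ∈ P, (n - s).choose (k i - s)
  set c := ∑ i ∈ P, (n - 1).choose (k i - 1)
  set mm := (t - 1) * (s - 1)
  refine ⟨by omega, by omega, fun h => by omega⟩
end

section
/- Let t = 4, k₁ = k₂ ≥ k₃ = k₄, and n = k₁ + k₃ < k₁ + k₂ (so k₁ > k₃). If ℱ₁, ℱ₂ ⊆ binomial([n],k₁) and ℱ₃, ℱ₄ ⊆ binomial([n],k₃) are nonempty pairwise cross intersecting, then |ℱ₁|+|ℱ₂|+|ℱ₃|+|ℱ₄| ≤ 2·C(n,k₁), with equality if and only if ℱ₃ = ℱ₄ is an intersecting family and ℱ₁ = ℱ₂ = binomial([n],k₁) \ { [n]\F : F ∈ ℱ₃ }. -/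
open Finset

theorem stmt18 (n k1 k3 : ℕ) (h1 : 1 ≤ k3) (h2 : k3 < k1) (hn : n = k1 + k3)
    (F1 F2 F3 F4 : Finset (Finset ℕ))
    (hF1 : F1 ⊆ ksubsets n k1) (hF2 : F2 ⊆ ksubsets n k1)
    (hF3 : F3 ⊆ ksubsets n k3) (hF4 : F4 ⊆ ksubsets n k3)
    (hne1 : F1.Nonempty) (hne2 : F2.Nonempty) (hne3 : F3.Nonempty) (hne4 : F4.Nonempty)
    (h12 : crossInt F1 F2) (h13 : crossInt F1 F3) (h14 : crossInt F1 F4)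
    (h23 : crossInt F2 F3) (h24 : crossInt F2 F4) (h34 : crossInt F3 F4) :
    F1.card + F2.card + F3.card + F4.card ≤ 2 * n.choose k1 ∧
    (F1.card + F2.card + F3.card + F4.card = 2 * n.choose k1 ↔
      (F3 = F4 ∧ (∀ X ∈ F3, ∀ Y ∈ F3, (X ∩ Y).Nonempty) ∧ F1 = F2 ∧
        F1 = ksubsets n k1 \ F3.image (fun X => Finset.Icc 1 n \ X))) := by 
  classical
  set U := Finset.Icc 1 n with hU
  have hUcard : U.card = n := by simp [hU]
  set c : Finset ℕ → Finset ℕ := fun X => U \ X with hc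
  have hmem1 : ∀ A, A ∈ ksubsets n k1 ↔ A ⊆ U ∧ A.card = k1 := by
    intro A; simp [ksubsets, Finset.mem_powersetCard, hU]
  have hmem3 : ∀ A, A ∈ ksubsets n k3 ↔ A ⊆ U ∧ A.card = k3 := by
    intro A; simp [ksubsets, Finset.mem_powersetCard, hU]
  have hcard1 : (ksubsets n k1).card = n.choose k1 := by
    simp [ksubsets, Finset.card_powersetCard, hUcard]
  have hc3 : ∀ X ∈ ksubsets n k3, c X ∈ ksubsets n k1 := by
    intro X hX
    rw [hmem3] at hX; rw [hmem1]
    refine ⟨Finset.sdiff_subset, ?_⟩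
    rw [Finset.card_sdiff_of_subset hX.1, hUcard, hX.2]; omega
  have hcc : ∀ X, X ⊆ U → c (c X) = X := by
    intro X hX
    simp only [hc]
    exact Finset.sdiff_sdiff_eq_self hX
  have hcinj : ∀ X, X ⊆ U → ∀ Y, Y ⊆ U → c X = c Y → X = Y := by
    intro X hX Y hY h
    rw [← hcc X hX, ← hcc Y hY, h]
  have himg : ∀ G : Finset (Finset ℕ), G ⊆ ksubsets n k3 → (G.image c).card = G.card := by
    intro G hG
    apply Finset.card_image_of_injOn
    intro X hX Y hY h
    exact hcinj X ((hmem3 X).1 (hG hX)).1 Y ((hmem3 Y).1 (hG hY)).1 h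
  have hdisj : ∀ (F G : Finset (Finset ℕ)), G ⊆ ksubsets n k3 →
      crossInt F G → Disjoint F (G.image c) := by
    intro F G hG hFG
    rw [Finset.disjoint_left]
    intro A hA hA'
    obtain ⟨B, hB, rfl⟩ := Finset.mem_image.1 hA'
    have := hFG _ hA _ hB
    rw [hc] at this
    simp only [Finset.sdiff_inter_self] at this
    exact Finset.not_nonempty_empty this
  have hsub : ∀ (F G : Finset (Finset ℕ)), F ⊆ ksubsets n k1 → G ⊆ ksubsets n k3 →
      F ∪ G.image c ⊆ ksubsets n k1 := by
    intro F G hF hG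
    apply Finset.union_subset hF
    intro A hA
    obtain ⟨B, hB, rfl⟩ := Finset.mem_image.1 hA
    exact hc3 B (hG hB)
  have hbound : ∀ (F G : Finset (Finset ℕ)), F ⊆ ksubsets n k1 → G ⊆ ksubsets n k3 →
      crossInt F G → F.card + G.card ≤ n.choose k1 := by
    intro F G hF hG hFG
    have h1 := Finset.card_le_card (hsub F G hF hG)
    rw [Finset.card_union_of_disjoint (hdisj F G hG hFG), hcard1, himg G hG] at h1
    exact h1
  have b14 := hbound F1 F4 hF1 hF4 h14
  have b23 := hbound F2 F3 hF2 hF3 h23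
  constructor
  · omega
  constructor
  · -- forward direction of the iff
    intro heq
    have e14 : F1.card + F4.card = n.choose k1 := by omega
    have e23 : F2.card + F3.card = n.choose k1 := by omega
    have hu14 : F1 ∪ F4.image c = ksubsets n k1 := by
      apply Finset.eq_of_subset_of_card_le (hsub F1 F4 hF1 hF4)
      rw [Finset.card_union_of_disjoint (hdisj F1 F4 hF4 h14), hcard1, himg F4 hF4, e14]
    have hu23 : F2 ∪ F3.image c = ksubsets n k1 := by
      apply Finset.eq_of_subset_of_card_le (hsub F2 F3 hF2 hF3)
      rw [Finset.card_union_of_disjoint (hdisj F2 F3 hF3 h23), hcard1, himg F3 hF3, e23]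
    -- F3 ⊆ F4
    have h34' : F3 ⊆ F4 := by
      intro X hX
      by_contra hXn
      have hXU : X ⊆ U := ((hmem3 X).1 (hF3 hX)).1
      have hcX : c X ∈ ksubsets n k1 := hc3 X (hF3 hX)
      have : c X ∈ F1 ∪ F4.image c := by rw [hu14]; exact hcX
      rcases Finset.mem_union.1 this with h | h
      · have hint := h13 _ h _ hX
        simp only [hc, Finset.sdiff_inter_self] at hint
        exact Finset.not_nonempty_empty hint
      · obtain ⟨Y, hY, hYe⟩ := Finset.mem_image.1 h
        have : Y = X := hcinj Y ((hmem3 Y).1 (hF4 hY)).1 X hXU hYe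
        exact hXn (this ▸ hY)
    have h43' : F4 ⊆ F3 := by
      intro X hX
      by_contra hXn
      have hXU : X ⊆ U := ((hmem3 X).1 (hF4 hX)).1
      have hcX : c X ∈ ksubsets n k1 := hc3 X (hF4 hX)
      have : c X ∈ F2 ∪ F3.image c := by rw [hu23]; exact hcX
      rcases Finset.mem_union.1 this with h | h
      · have hint := h24 _ h _ hX
        simp only [hc, Finset.sdiff_inter_self] at hint
        exact Finset.not_nonempty_empty hint
      · obtain ⟨Y, hY, hYe⟩ := Finset.mem_image.1 h
        have : Y = X := hcinj Y ((hmem3 Y).1 (hF3 hY)).1 X hXU hYe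
        exact hXn (this ▸ hY)
    have h34eq : F3 = F4 := Finset.Subset.antisymm h34' h43'
    have hF1eq : F1 = ksubsets n k1 \ F4.image c := by
      rw [← hu14, Finset.union_sdiff_cancel_right (hdisj F1 F4 hF4 h14)]
    have hF2eq : F2 = ksubsets n k1 \ F3.image c := by
      rw [← hu23, Finset.union_sdiff_cancel_right (hdisj F2 F3 hF3 h23)]
    refine ⟨h34eq, ?_, ?_, ?_⟩
    · intro X hX Y hY
      exact h34 _ hX _ (h34' hY)
    · rw [hF1eq, hF2eq, h34eq]
    · rw [hF1eq, ← h34eq]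
  · -- reverse direction
    rintro ⟨h34eq, _, h12eq, hF1eq⟩
    have himg3 : F3.image c ⊆ ksubsets n k1 := by
      intro A hA
      obtain ⟨B, hB, rfl⟩ := Finset.mem_image.1 hA
      exact hc3 B (hF3 hB)
    have hc3card : (F3.image c).card = F3.card := himg F3 hF3
    have hle : F3.card ≤ n.choose k1 := by
      rw [← hc3card, ← hcard1]; exact Finset.card_le_card himg3
    have hF1card : F1.card = n.choose k1 - F3.card := by
      have : F1 = ksubsets n k1 \ F3.image c := hF1eq
      rw [this, Finset.card_sdiff_of_subset himg3, hcard1, hc3card]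
    have : F2.card = F1.card := by rw [h12eq]
    have h4c : F4.card = F3.card := by rw [h34eq]
    omega
end
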